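/- For every n ≥ 7, the number of sets of mentions over a sentence of n words, namely 2^{n(n+1)/2}, strictly exceeds the number of possible separator sequences, namely 8^{n+1}; consequently, by pigeonhole, for n ≥ 7 there exist two distinct sets of mentions with the same separator sequence. -/

import Mathlib

inductive Marker | S | E | C
deriving DecidableEq

/-- Separator sequence of a set of mentions (intervals). Gap `k` lies between word `k` and word `k+1`. -/
def sep (M : Set (ℕ × ℕ)) (k : ℕ) : Set Marker :=
  {m | (m = Marker.S ∧ ∃ p ∈ M, p.1 = k + 1) ∨
       (m = Marker.E ∧ ∃ p ∈ M, p.2 = k) ∨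
       (m = Marker.C ∧ ∃ p ∈ M, p.1 ≤ k ∧ k + 1 ≤ p.2)}

/-- `M` is a set of mentions over a sentence of `n` words. -/
def Valid (n : ℕ) (M : Set (ℕ × ℕ)) : Prop :=
  ∀ p ∈ M, 1 ≤ p.1 ∧ p.1 ≤ p.2 ∧ p.2 ≤ n

/-! The counting inequality reduces to `3 (n + 1) < n (n + 1) / 2`. Rather than invoking the
pigeonhole principle, the collision is exhibited: the mentions `[1, 2], [2, 3]` and
`[1, 3], [2, 2]` have the same separator sequence as soon as `n ≥ 3`. -/

theorem eight_pow_succ_lt_two_pow_triangle {n : ℕ} (hn : 7 ≤ n) :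
    8 ^ (n + 1) < 2 ^ (n * (n + 1) / 2) := by
  rw [show (8 : ℕ) = 2 ^ 3 by norm_num, ← pow_mul]
  apply Nat.pow_lt_pow_right (by norm_num)
  have : 2 * (3 * (n + 1) + 1) ≤ n * (n + 1) := by nlinarith
  omega

/-- The separators record only where mentions start, end and which gaps they cover, not how
starts are matched with ends. -/
theorem sep_chain_eq_sep_nested {a b c : ℕ} (hab : a ≤ b) (hbc : b ≤ c) :
    sep {(a, b), (b, c)} = sep {(a, c), (b, b)} := by
  funext k
  ext m
  simp only [sep, Set.mem_ofPred_eq, Set.mem_insert_iff, Set.mem_singleton_iff]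
  cases m <;> simp <;> omega

theorem valid_pair {n : ℕ} {p q : ℕ × ℕ} (hp : 1 ≤ p.1 ∧ p.1 ≤ p.2 ∧ p.2 ≤ n)
    (hq : 1 ≤ q.1 ∧ q.1 ≤ q.2 ∧ q.2 ≤ n) : Valid n {p, q} := by
  rintro r (rfl | rfl)
  exacts [hp, hq]

theorem exists_ne_sep_eq {n : ℕ} (hn : 3 ≤ n) :
    ∃ M M' : Set (ℕ × ℕ), M.Finite ∧ M'.Finite ∧ Valid n M ∧ Valid n M' ∧
      M ≠ M' ∧ sep M = sep M' := by
  refine ⟨{(1, 2), (2, 3)}, {(1, 3), (2, 2)}, Set.toFinite _, Set.toFinite _,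
    valid_pair (by omega) (by omega), valid_pair (by omega) (by omega), ?_,
    sep_chain_eq_sep_nested (by norm_num) (by norm_num)⟩
  intro h
  have : ((1 : ℕ), (2 : ℕ)) ∈ ({(1, 3), (2, 2)} : Set (ℕ × ℕ)) := h ▸ Set.mem_insert _ _
  simp at this

theorem pigeonhole_collision (n : ℕ) (hn : 7 ≤ n) :
    8 ^ (n + 1) < 2 ^ (n * (n + 1) / 2) ∧
    ∃ M M' : Set (ℕ × ℕ), M.Finite ∧ M'.Finite ∧ Valid n M ∧ Valid n M' ∧
      M ≠ M' ∧ sep M = sep M' :=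
  ⟨eight_pow_succ_lt_two_pow_triangle hn, exists_ne_sep_eq (by omega)⟩
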